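/- arXiv:2307.05040 — 7 statements merged into one kernel-verified Lean document; each statement's English description precedes it below -/
import Mathlib

section
/- Let M = (W,R,Δ,V) be a Θtr-θ-nice model (i.e., every w ∈ Δ is locally transitive, and every w with no R-path of length 2 starting at w is in Δ). Define M0 as the tree unravelling of M (with Δ' containing the paths whose original is in Δ), and inductively R_{i+1} = R_i ∪ {(x',y') : x' ∈ Δ' and ∃z', (x',z') ∈ R_i and (z',y') ∈ R_i}, and R_∞ = ⋃_{i∈ℕ} R_i. Then for all paths x', y' and all i ∈ ℕ ∪ {∞}: if (x',y') ∈ R_i then (x,y) ∈ R, where x, y are the originals (last elements) of x', y'. -/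
inductive Form : Type where
  | atom : Nat → Form
  | top : Form
  | neg : Form → Form
  | or : Form → Form → Form
  | box : Form → Form

def Form.imp (φ ψ : Form) : Form := .or (.neg φ) ψ
def Form.bot : Form := .neg .top
def Form.dia (φ : Form) : Form := .neg (.box (.neg φ))
def Form.and (φ ψ : Form) : Form := .neg (.or (.neg φ) (.neg ψ))

def sat {W : Type} (R : W → W → Prop) (V : Nat → W → Prop) : W → Form → Prop
  | w, .atom p => V p w
  | _, .top => True
  | w, .neg φ => ¬ sat R V w φ
  | w, .or φ ψ => sat R V w φ ∨ sat R V w ψ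
  | w, .box φ => ∀ v, R w v → sat R V v φ

def TPath (W : Type) (R : W → W → Prop) : Type := {l : List W // l ≠ [] ∧ l.Chain' R}

def orig {W : Type} {R : W → W → Prop} (p : TPath W R) : W := p.1.getLast p.2.1

def R0 {W : Type} {R : W → W → Prop} (x y : TPath W R) : Prop := ∃ v, y.1 = x.1 ++ [v]

/-- Local transitivity at a world. -/
def LocTrans {W : Type} (R : W → W → Prop) (w : W) : Prop :=
  ∀ x y, R w x → R x y → R w y

/-- Θtr-θ-niceness of a model (W, R, Δ, V). -/
def NiceTrans {W : Type} (R : W → W → Prop) (Δ : W → Prop) : Prop :=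
  (∀ w, Δ w → LocTrans R w) ∧ (∀ w, (¬ ∃ x y, R w x ∧ R x y) → Δ w)

/-- The designated set of the unravelling: inherited from the original. -/
def Δ' {W : Type} {R : W → W → Prop} (Δ : W → Prop) (x : TPath W R) : Prop := Δ (orig x)

/-- The sequence of relations R_i on the unravelling. -/
def Rseq {W : Type} {R : W → W → Prop} (Δ : W → Prop) :
    ℕ → TPath W R → TPath W R → Prop
  | 0 => R0
  | i + 1 => fun x y =>
      Rseq Δ i x y ∨ (Δ' Δ x ∧ ∃ z, Rseq Δ i x z ∧ Rseq Δ i z y)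

/-- The limit relation R_∞. -/
def Rinf {W : Type} {R : W → W → Prop} (Δ : W → Prop) (x y : TPath W R) : Prop :=
  ∃ i, Rseq Δ i x y

theorem closure_orig_edge {W : Type} (R : W → W → Prop) (Δ : W → Prop)
    (hnice : NiceTrans R Δ) :
    (∀ (i : ℕ) (x y : TPath W R), Rseq Δ i x y → R (orig x) (orig y)) ∧
    (∀ x y : TPath W R, Rinf Δ x y → R (orig x) (orig y)) := by
  have base : ∀ i (x y : TPath W R), Rseq Δ i x y → R (orig x) (orig y) := by
    intro i
    induction i with
    | zero =>
      intro x y h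
      obtain ⟨v, hv⟩ := h
      have hy : orig y = v := by
        simp [orig, hv, List.getLast_append]
      have hch : (x.1 ++ [v]).Chain' R := hv ▸ y.2.2
      replace hch := List.isChain_append.1 hch
      have := hch.2.2 (orig x) (by simp [orig, List.getLast?_eq_getLast x.2.1]) v (by simp)
      rwa [hy]
    | succ i ih =>
      intro x y h
      rcases h with h | ⟨hΔ, z, h1, h2⟩
      · exact ih x y h
      · exact hnice.1 (orig x) hΔ (orig z) (orig y) (ih x z h1) (ih z y h2)
  exact ⟨base, fun x y ⟨i, h⟩ => base i x y h⟩
end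

section
/- With the construction of the previous lemma (M nice for local transitivity, M0 its tree unravelling, R_{i+1} adding edges (x',y') whenever x'∈Δ' and there is z' with (x',z')∈R_i, (z',y')∈R_i, and R_∞ the union), the 'original' relation (relating each path in the unravelling to its last element in M) is a bisimulation between M and the model (W', R_i, Δ', V') for every i ∈ ℕ ∪ {∞}. -/
/-- Bisimulation between models with designated sets: atomic agreement (including
the designated sets), forth and back. -/
def BisimD {W1 W2 : Type} (R1 : W1 → W1 → Prop) (D1 : W1 → Prop) (V1 : Nat → W1 → Prop)
    (R2 : W2 → W2 → Prop) (D2 : W2 → Prop) (V2 : Nat → W2 → Prop)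
    (Z : W1 → W2 → Prop) : Prop :=
  (∀ w1 w2, Z w1 w2 → ((∀ p, (V1 p w1 ↔ V2 p w2)) ∧ (D1 w1 ↔ D2 w2))) ∧
  (∀ w1 w2, Z w1 w2 → ∀ w1', R1 w1 w1' → ∃ w2', R2 w2 w2' ∧ Z w1' w2') ∧
  (∀ w1 w2, Z w1 w2 → ∀ w2', R2 w2 w2' → ∃ w1', R1 w1 w1' ∧ Z w1' w2')

def V0 {W : Type} {R : W → W → Prop} (V : Nat → W → Prop) (p : Nat) (x : TPath W R) : Prop :=
  V p (orig x)

lemma orig_append {W : Type} {R : W → W → Prop} (x : TPath W R) (v : W)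
    (h : (x.1 ++ [v] : List W) ≠ [] ∧ (x.1 ++ [v]).Chain' R) :
    orig (⟨x.1 ++ [v], h⟩ : TPath W R) = v := by
  simp only [orig]; simp [List.getLast_append]

lemma R0_orig {W : Type} {R : W → W → Prop} {x y : TPath W R} (h : R0 x y) :
    R (orig x) (orig y) := by
  obtain ⟨v, hv⟩ := h
  obtain ⟨l, hl⟩ := y
  simp only at hv
  subst hv
  have hc := hl.2
  unfold List.Chain' at hc; rw [List.isChain_append] at hc
  obtain ⟨-, -, h3⟩ := hc
  have := h3 (x.1.getLast x.2.1) (by rw [List.getLast?_eq_getLast x.2.1]; rfl) v rfl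
  have horig : orig (⟨x.1 ++ [v], hl⟩ : TPath W R) = v := by
    simp only [orig]; simp [List.getLast_append]
  rw [horig]; exact this

lemma Rseq_orig {W : Type} {R : W → W → Prop} {Δ : W → Prop} (hnice : NiceTrans R Δ) :
    ∀ i (x y : TPath W R), Rseq Δ i x y → R (orig x) (orig y) := by
  intro i
  induction i with
  | zero => exact fun x y h => R0_orig h
  | succ i ih =>
    intro x y h
    rcases h with h | ⟨hd, z, h1, h2⟩
    · exact ih x y h
    · exact hnice.1 _ hd _ _ (ih _ _ h1) (ih _ _ h2)

lemma R0_Rseq {W : Type} {R : W → W → Prop} {Δ : W → Prop} :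
    ∀ i (x y : TPath W R), R0 x y → Rseq Δ i x y := by
  intro i
  induction i with
  | zero => exact fun _ _ h => h
  | succ i ih => exact fun x y h => Or.inl (ih x y h)

lemma forth_R0 {W : Type} {R : W → W → Prop} (x : TPath W R) {w' : W}
    (h : R (orig x) w') : ∃ y : TPath W R, R0 x y ∧ orig y = w' := by
  have hc : (x.1 ++ [w']).Chain' R := by
    unfold List.Chain'; rw [List.isChain_append]
    refine ⟨x.2.2, List.isChain_singleton _, ?_⟩
    intro a ha b hb
    rw [List.getLast?_eq_getLast x.2.1] at ha
    simp at hb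
    cases ha; cases hb; exact h
  refine ⟨⟨x.1 ++ [w'], by simp, hc⟩, ⟨w', rfl⟩, orig_append x w' _⟩

theorem closure_bisim {W : Type} (R : W → W → Prop) (Δ : W → Prop) (V : Nat → W → Prop)
    (hnice : NiceTrans R Δ) :
    (∀ i : ℕ, BisimD R Δ V (Rseq (R := R) Δ i) (Δ' Δ) (V0 V) (fun w x => orig x = w)) ∧
    BisimD R Δ V (Rinf (R := R) Δ) (Δ' Δ) (V0 V) (fun w x => orig x = w) := by
  constructor
  · intro i
    refine ⟨?_, ?_, ?_⟩
    · rintro w x rfl; exact ⟨fun p => Iff.rfl, Iff.rfl⟩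
    · rintro w x rfl w' hR
      obtain ⟨y, hy, hoy⟩ := forth_R0 x hR
      exact ⟨y, R0_Rseq i x y hy, hoy⟩
    · rintro w x rfl y hy
      exact ⟨orig y, Rseq_orig hnice i x y hy, rfl⟩
  · refine ⟨?_, ?_, ?_⟩
    · rintro w x rfl; exact ⟨fun p => Iff.rfl, Iff.rfl⟩
    · rintro w x rfl w' hR
      obtain ⟨y, hy, hoy⟩ := forth_R0 x hR
      exact ⟨y, ⟨0, hy⟩, hoy⟩
    · rintro w x rfl y ⟨i, hy⟩
      exact ⟨orig y, Rseq_orig hnice i x y hy, rfl⟩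
end

section
/- In the model M_∞ = (W', R_∞, Δ', V') obtained from a Θtr-θ-nice model M by the closure construction, every x' ∈ Δ' is locally transitive with respect to R_∞: if x' ∈ Δ', (x',y') ∈ R_∞ and (y',z') ∈ R_∞, then (x',z') ∈ R_∞. -/
lemma Rseq_mono {W : Type} {R : W → W → Prop} (Δ : W → Prop) {i j : ℕ} (h : i ≤ j)
    {x y : TPath W R} (hxy : Rseq Δ i x y) : Rseq Δ j x y := by
  induction j with
  | zero => exact Nat.le_zero.mp h ▸ hxy
  | succ j ih =>
    rcases Nat.lt_or_ge i (j+1) with h' | h'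
    · exact Or.inl (ih (Nat.lt_succ_iff.mp h'))
    · exact (Nat.le_antisymm h h') ▸ hxy

theorem closure_locTrans_of_mem {W : Type} (R : W → W → Prop) (Δ : W → Prop)
    (hnice : NiceTrans R Δ) (x' y' z' : TPath W R)
    (hx : Δ' Δ x') (hxy : Rinf Δ x' y') (hyz : Rinf Δ y' z') :
    Rinf Δ x' z' := by
  obtain ⟨i, hi⟩ := hxy
  obtain ⟨j, hj⟩ := hyz
  exact ⟨max i j + 1, Or.inr ⟨hx, y', Rseq_mono Δ (le_max_left i j) hi,
    Rseq_mono Δ (le_max_right i j) hj⟩⟩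
end

section
/- In the model M_∞ obtained from a Θtr-θ-nice model M by the closure construction, every x' ∉ Δ' fails local transitivity with respect to R_∞: there exist y', z' with (x',y') ∈ R_∞ and (y',z') ∈ R_∞ but (x',z') ∉ R_∞. -/
lemma Rseq_nondelta {W : Type} {R : W → W → Prop} {Δ : W → Prop} {x z : TPath W R}
    (hx : ¬ Δ' Δ x) : ∀ i, Rseq Δ i x z → R0 x z := by
  intro i
  induction i with
  | zero => exact id
  | succ i ih =>
    rintro (h | ⟨hΔ, _⟩)
    · exact ih h
    · exact absurd hΔ hx

theorem closure_not_locTrans_of_not_mem {W : Type} (R : W → W → Prop) (Δ : W → Prop)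
    (hnice : NiceTrans R Δ) (x' : TPath W R) (hx : ¬ Δ' Δ x') :
    ∃ y' z' : TPath W R, Rinf Δ x' y' ∧ Rinf Δ y' z' ∧ ¬ Rinf Δ x' z' := by
  
  obtain ⟨a, b, hxa, hab⟩ := not_imp_not.mpr (hnice.2 (orig x')) hx |> not_not.mp
  have hchain1 : (x'.1 ++ [a]).Chain' R := by
    show List.IsChain R _
    rw [List.isChain_append]
    refine ⟨x'.2.2, List.isChain_singleton a, ?_⟩
    intro u hu v hv
    simp only [List.head?_cons, Option.mem_def, Option.some.injEq] at hv
    rw [List.getLast?_eq_getLast x'.2.1, Option.mem_def, Option.some.injEq] at hu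
    subst hu; subst hv; exact hxa
  set y' : TPath W R := ⟨x'.1 ++ [a], by simp, hchain1⟩ with hy'
  have hchain2 : (y'.1 ++ [b]).Chain' R := by
    show List.IsChain R _
    rw [List.isChain_append]
    refine ⟨hchain1, List.isChain_singleton b, ?_⟩
    intro u hu v hv
    simp only [List.head?_cons, Option.mem_def, Option.some.injEq] at hv
    rw [List.getLast?_eq_getLast y'.2.1, Option.mem_def, Option.some.injEq] at hu
    simp [hy'] at hu
    subst hu; subst hv; exact hab
  set z' : TPath W R := ⟨y'.1 ++ [b], by simp, hchain2⟩ with hz'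
  refine ⟨y', z', ⟨0, a, rfl⟩, ⟨0, b, rfl⟩, ?_⟩
  rintro ⟨i, hi⟩
  obtain ⟨v, hv⟩ := Rseq_nondelta hx i hi
  have : (x'.1 ++ [a] ++ [b]).length = (x'.1 ++ [v]).length := by rw [← hv]
  simp at this
end

section
/- For every Θtr-θ-nice model M and every world w of M, there exists a model M' in Θtr-θ-harmony and a world w' of M' such that (M,w) and (M',w') satisfy the same formulas of the modal language extended with the symbol θ (where θ holds at a world iff it belongs to the designated set). -/
/-- Modal formulas extended with the nullary symbol θ. -/
inductive FormT : Type where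
  | atom : Nat → FormT
  | top : FormT
  | theta : FormT
  | neg : FormT → FormT
  | or : FormT → FormT → FormT
  | box : FormT → FormT

def FormT.imp (φ ψ : FormT) : FormT := .or (.neg φ) ψ
def FormT.bot : FormT := .neg .top

def satT {W : Type} (R : W → W → Prop) (Δ : W → Prop) (V : Nat → W → Prop) :
    W → FormT → Prop
  | w, .atom p => V p w
  | _, .top => True
  | w, .theta => Δ w
  | w, .neg φ => ¬ satT R Δ V w φ
  | w, .or φ ψ => satT R Δ V w φ ∨ satT R Δ V w ψ
  | w, .box φ => ∀ v, R w v → satT R Δ V v φ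

/-- Θtr-θ-harmony. -/
def Harmony {W : Type} (R : W → W → Prop) (Δ : W → Prop) : Prop :=
  ∀ w, Δ w ↔ LocTrans R w

/-- Θtr-θ-niceness. -/
def Nice {W : Type} (R : W → W → Prop) (Δ : W → Prop) (V : Nat → W → Prop) : Prop :=
  (∀ w, Δ w → LocTrans R w) ∧
  (∀ w, satT R Δ V w (.box (.box FormT.bot)) → Δ w)

/-- The relation on the expanded model `W × ℕ`. -/
def Rexp {W : Type} (R : W → W → Prop) (Δ : W → Prop) (p q : W × ℕ) : Prop :=
  R p.1 q.1 ∧ ((Δ p.1 ∧ p.2 + 1 ≤ q.2) ∨ (¬ Δ p.1 ∧ q.2 = p.2 + 1))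

lemma sat_exp {W : Type} (R : W → W → Prop) (Δ : W → Prop) (V : Nat → W → Prop)
    (φ : FormT) : ∀ (u : W) (i : ℕ),
    satT R Δ V u φ ↔ satT (Rexp R Δ) (fun p => Δ p.1) (fun n p => V n p.1) (u, i) φ := by
  induction φ with
  | atom p => intro u i; rfl
  | top => intro u i; rfl
  | theta => intro u i; rfl
  | neg φ ih => intro u i; simp only [satT]; rw [ih u i]
  | or φ ψ ih1 ih2 => intro u i; simp only [satT]; rw [ih1 u i, ih2 u i]
  | box φ ih =>
    intro u i
    simp only [satT]
    constructor
    · rintro h ⟨v, j⟩ ⟨hR, _⟩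
      exact (ih v j).mp (h v hR)
    · intro h v hR
      have hedge : Rexp R Δ (u, i) (v, i + 1) := by
        constructor
        · exact hR
        · by_cases hΔ : Δ u
          · exact Or.inl ⟨hΔ, le_refl _⟩
          · exact Or.inr ⟨hΔ, rfl⟩
      exact (ih v (i + 1)).mpr (h (v, i + 1) hedge)

theorem nice_equiv_harmonious {W : Type} (R : W → W → Prop) (Δ : W → Prop)
    (V : Nat → W → Prop) (hnice : Nice R Δ V) (w : W) :
    ∃ (W' : Type) (R' : W' → W' → Prop) (Δ' : W' → Prop) (V' : Nat → W' → Prop)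
      (w' : W'), Harmony R' Δ' ∧
        ∀ φ : FormT, satT R Δ V w φ ↔ satT R' Δ' V' w' φ := by
  refine ⟨W × ℕ, Rexp R Δ, fun p => Δ p.1, fun n p => V n p.1, (w, 0), ?_, ?_⟩
  · rintro ⟨u, i⟩
    constructor
    · -- Δ u → local transitivity at (u, i)
      rintro hΔ ⟨x, j⟩ ⟨y, k⟩ ⟨hux, hj⟩ ⟨hxy, hk⟩
      refine ⟨hnice.1 u hΔ x y hux hxy, Or.inl ⟨hΔ, ?_⟩⟩
      have hj' : i + 1 ≤ j := by
        rcases hj with ⟨_, h⟩ | ⟨_, h⟩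
        · exact h
        · omega
      have hk' : j + 1 ≤ k := by
        rcases hk with ⟨_, h⟩ | ⟨_, h⟩
        · exact h
        · omega
      omega
    · -- local transitivity at (u, i) → Δ u
      intro hlt
      by_contra hΔ
      -- by niceness (2), u has a grandchild
      have hnbb : ¬ satT R Δ V u (.box (.box FormT.bot)) := fun h => hΔ (hnice.2 u h)
      simp only [satT, FormT.bot, not_forall, not_true, not_not] at hnbb
      obtain ⟨x, hux, y, hxy, _⟩ := hnbb
      have e1 : Rexp R Δ (u, i) (x, i + 1) := ⟨hux, Or.inr ⟨hΔ, rfl⟩⟩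
      have e2 : Rexp R Δ (x, i + 1) (y, i + 2) := by
        refine ⟨hxy, ?_⟩
        by_cases hΔx : Δ x
        · exact Or.inl ⟨hΔx, by omega⟩
        · exact Or.inr ⟨hΔx, rfl⟩
      have := hlt _ _ e1 e2
      rcases this.2 with ⟨h, _⟩ | ⟨_, h⟩
      · exact hΔ h
      · omega
  · intro φ
    exact sat_exp R Δ V φ w 0
end

section
/- The axioms Eθtr (θ → (□φ → □□φ), for all formulas φ) and TIθtr (□□⊥ → θ) are sound with respect to the class of models in Θtr-θ-harmony: every instance of these axioms is true at every world of every model in harmony. -/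
theorem soundness_Etheta_TItheta {W : Type} (R : W → W → Prop) (Δ : W → Prop)
    (V : Nat → W → Prop) (hharm : Harmony R Δ) (w : W) :
    (∀ φ : FormT,
      satT R Δ V w (FormT.imp .theta (FormT.imp (.box φ) (.box (.box φ))))) ∧
    satT R Δ V w (FormT.imp (.box (.box FormT.bot)) .theta) := by
  constructor
  · intro φ
    show ¬ Δ w ∨ (¬ (∀ v, R w v → satT R Δ V v φ) ∨
      ∀ v, R w v → ∀ u, R v u → satT R Δ V u φ)
    by_cases hθ : Δ w
    · right
      by_cases hb : ∀ v, R w v → satT R Δ V v φ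
      · right; intro v hv u hu; exact hb u ((hharm w).mp hθ v u hv hu)
      · left; exact hb
    · left; exact hθ
  · show ¬ (∀ v, R w v → ∀ u, R v u → ¬ True) ∨ Δ w
    by_cases h : ∀ v, R w v → ∀ u, R v u → ¬ True
    · right; exact (hharm w).mpr (fun x y hx hy => absurd trivial (h x hx y hy))
    · left; exact h
end

section
/- There is no formula χ of basic modal logic (not containing θ) such that χ → θ is valid on all models in Θtr-θ-harmony, unless χ semantically implies □□⊥. Precisely: if χ is a θ-free modal formula satisfiable at some pointed model with M,w ⊭ □□⊥, then there is a model M' in Θtr-θ-harmony and a world w' with M',w' ⊨ χ and M',w' ⊭ θ. -/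
/-- No sound introduction axiom `χ → θ` with θ-free `χ` exists, unless `χ` implies □□⊥:
any θ-free modal formula satisfiable at a world refuting □□⊥ is satisfiable at a world
of a harmonious model whose designated set does not contain that world. -/
theorem no_nontrivial_introduction_axiom
    {W : Type} (χ : Form) (R : W → W → Prop) (V : Nat → W → Prop) (w : W)
    (hχ : sat R V w χ) (hbb : ¬ sat R V w (.box (.box Form.bot))) :
    ∃ (W' : Type) (R' : W' → W' → Prop) (Δ' : W' → Prop) (V' : Nat → W' → Prop)
      (w' : W'), Harmony R' Δ' ∧ sat R' V' w' χ ∧ ¬ Δ' w' := by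
  -- Level construction: worlds are pairs (u, n), edges go up one level.
  refine ⟨W × ℕ, fun a b => R a.1 b.1 ∧ b.2 = a.2 + 1, LocTrans (fun a b => R a.1 b.1 ∧ b.2 = a.2 + 1),
    fun p a => V p a.1, (w, 0), fun _ => Iff.rfl, ?_, ?_⟩
  · have key : ∀ (φ : Form) (u : W) (n : ℕ),
        sat (fun a b : W × ℕ => R a.1 b.1 ∧ b.2 = a.2 + 1) (fun p a => V p a.1) (u, n) φ ↔
        sat R V u φ := by
      intro φ
      induction φ with
      | atom p => intro u n; exact Iff.rfl
      | top => intro u n; exact Iff.rfl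
      | neg φ ih => intro u n; exact not_congr (ih u n)
      | or φ ψ ih1 ih2 => intro u n; exact or_congr (ih1 u n) (ih2 u n)
      | box φ ih =>
        intro u n
        constructor
        · intro h v hv
          exact (ih v (n+1)).mp (h (v, n+1) ⟨hv, rfl⟩)
        · rintro h ⟨v1, v2⟩ ⟨h1, h2⟩
          exact (ih v1 v2).mpr (h v1 h1)
    exact (key χ w 0).mpr hχ
  · intro hLT
    simp only [sat, Form.bot, not_forall] at hbb
    obtain ⟨x, hx, y, hy, _⟩ := hbb
    have := hLT (x, 1) (y, 2) ⟨hx, rfl⟩ ⟨hy, rfl⟩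
    omega
end
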